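/- For any poset P, the lattice Co(P) satisfies the Stirlitz identity (S): a ∧ (b′ ∨ c) = (a ∧ b′) ∨ ⋁_{i<2} ( a ∧ (bᵢ ∨ c) ∧ ((b′ ∧ (a ∨ bᵢ)) ∨ c) ), where b′ abbreviates b ∧ (b₀ ∨ b₁). -/
import Mathlib


/-- The join in the lattice `Co(P)` of order-convex subsets of `P`. -/
def cJoin {P : Type*} [PartialOrder P] (X Y : Set P) : Set P :=
  X ∪ Y ∪ {z | ∃ x ∈ X, ∃ y ∈ Y, (x < z ∧ z < y) ∨ (y < z ∧ z < x)}

namespace CoStirlitzAux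

variable {P : Type*} [PartialOrder P]

lemma left_subset (X Y : Set P) : X ⊆ cJoin X Y := fun _ hx => Or.inl (Or.inl hx)

lemma right_subset (X Y : Set P) : Y ⊆ cJoin X Y := fun _ hy => Or.inl (Or.inr hy)

lemma mem_between {X Y : Set P} {x y z : P} (hx : x ∈ X) (hy : y ∈ Y)
    (h : (x < z ∧ z < y) ∨ (y < z ∧ z < x)) : z ∈ cJoin X Y :=
  Or.inr ⟨x, hx, y, hy, h⟩

lemma cJoin_mono {X X' Y Y' : Set P} (hX : X ⊆ X') (hY : Y ⊆ Y') :
    cJoin X Y ⊆ cJoin X' Y' := by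
  rintro z ((h | h) | ⟨x, hx, y, hy, h⟩)
  · exact Or.inl (Or.inl (hX h))
  · exact Or.inl (Or.inr (hY h))
  · exact Or.inr ⟨x, hX hx, y, hY hy, h⟩

lemma cJoin_subset {X Y D : Set P} (hD : D.OrdConnected) (hX : X ⊆ D) (hY : Y ⊆ D) :
    cJoin X Y ⊆ D := by
  rintro z ((h | h) | ⟨x, hx, y, hy, (⟨h1, h2⟩ | ⟨h1, h2⟩)⟩)
  · exact hX h
  · exact hY h
  · exact hD.out (hX hx) (hY hy) ⟨h1.le, h2.le⟩
  · exact hD.out (hY hy) (hX hx) ⟨h1.le, h2.le⟩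

lemma cJoin_ordConnected {X Y : Set P} (hX : X.OrdConnected) (hY : Y.OrdConnected) :
    (cJoin X Y).OrdConnected := by
  constructor
  intro u hu v hv w hw
  obtain ⟨h1, h2⟩ := hw
  rcases h1.eq_or_lt with rfl | h1
  · exact hu
  rcases h2.eq_or_lt with rfl | h2
  · exact hv
  -- now u < w < v
  rcases hu with (hu | hu) | ⟨x₁, hx₁, y₁, hy₁, (⟨ha, hb⟩ | ⟨ha, hb⟩)⟩ <;>
    rcases hv with (hv | hv) | ⟨x₂, hx₂, y₂, hy₂, (⟨hc, hd⟩ | ⟨hc, hd⟩)⟩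
  · exact left_subset X Y (hX.out hu hv ⟨h1.le, h2.le⟩)
  · exact mem_between hu hv (Or.inl ⟨h1, h2⟩)
  · exact mem_between hu hy₂ (Or.inl ⟨h1, h2.trans hd⟩)
  · exact left_subset X Y (hX.out hu hx₂ ⟨h1.le, (h2.trans hd).le⟩)
  · exact mem_between hv hu (Or.inr ⟨h1, h2⟩)
  · exact right_subset X Y (hY.out hu hv ⟨h1.le, h2.le⟩)
  · exact right_subset X Y (hY.out hu hy₂ ⟨h1.le, (h2.trans hd).le⟩)
  · exact mem_between hx₂ hu (Or.inr ⟨h1, h2.trans hd⟩)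
  · exact left_subset X Y (hX.out hx₁ hv ⟨(ha.trans h1).le, h2.le⟩)
  · exact mem_between hx₁ hv (Or.inl ⟨ha.trans h1, h2⟩)
  · exact mem_between hx₁ hy₂ (Or.inl ⟨ha.trans h1, h2.trans hd⟩)
  · exact left_subset X Y (hX.out hx₁ hx₂ ⟨(ha.trans h1).le, (h2.trans hd).le⟩)
  · exact mem_between hv hy₁ (Or.inr ⟨ha.trans h1, h2⟩)
  · exact right_subset X Y (hY.out hy₁ hv ⟨(ha.trans h1).le, h2.le⟩)
  · exact right_subset X Y (hY.out hy₁ hy₂ ⟨(ha.trans h1).le, (h2.trans hd).le⟩)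
  · exact mem_between hx₂ hy₁ (Or.inr ⟨ha.trans h1, h2.trans hd⟩)

end CoStirlitzAux

open CoStirlitzAux in
/-- `Co(P)` satisfies the Stirlitz identity (S), where `B' = B ∩ (B₀ ∨ B₁)`. -/
theorem co_stirlitz {P : Type*} [PartialOrder P]
    (A B B₀ B₁ C : Set P) (hA : A.OrdConnected) (hB : B.OrdConnected)
    (hB0 : B₀.OrdConnected) (hB1 : B₁.OrdConnected) (hC : C.OrdConnected) :
    A ∩ cJoin (B ∩ cJoin B₀ B₁) C =
      cJoin
        (cJoin (A ∩ (B ∩ cJoin B₀ B₁))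
          (A ∩ cJoin B₀ C ∩ cJoin ((B ∩ cJoin B₀ B₁) ∩ cJoin A B₀) C))
        (A ∩ cJoin B₁ C ∩ cJoin ((B ∩ cJoin B₀ B₁) ∩ cJoin A B₁) C) := by
  set B' : Set P := B ∩ cJoin B₀ B₁ with hB'def
  have hB' : B'.OrdConnected := hB.inter (cJoin_ordConnected hB0 hB1)
  set T₀ : Set P := A ∩ cJoin B₀ C ∩ cJoin (B' ∩ cJoin A B₀) C with hT0def
  set T₁ : Set P := A ∩ cJoin B₁ C ∩ cJoin (B' ∩ cJoin A B₁) C with hT1def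
  apply Set.Subset.antisymm
  · -- hard direction
    rintro a ⟨haA, (hab' | haC) | ⟨b, hb, c, hc, horient⟩⟩
    · exact left_subset _ _ (left_subset _ _ ⟨haA, hab'⟩)
    · -- a ∈ C : a ∈ T₀
      exact left_subset _ _ (right_subset _ _
        ⟨⟨haA, right_subset _ _ haC⟩, right_subset _ _ haC⟩)
    · -- a strictly between b ∈ B' and c ∈ C
      obtain ⟨hbB, (hb0 | hb1) | ⟨b₀, hb₀, b₁, hb₁, hbor⟩⟩ := hb
      · -- b ∈ B₀ : a ∈ T₀
        refine left_subset _ _ (right_subset _ _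
          ⟨⟨haA, mem_between hb0 hc horient⟩,
            mem_between ⟨⟨hbB, left_subset _ _ hb0⟩, right_subset _ _ hb0⟩ hc horient⟩)
      · -- b ∈ B₁ : a ∈ T₁
        refine right_subset _ _
          ⟨⟨haA, mem_between hb1 hc horient⟩,
            mem_between ⟨⟨hbB, right_subset _ _ hb1⟩, right_subset _ _ hb1⟩ hc horient⟩
      · -- b strictly between b₀ ∈ B₀ and b₁ ∈ B₁
        rcases hbor with ⟨hb01, hb02⟩ | ⟨hb11, hb12⟩ <;>
          rcases horient with ⟨h1, h2⟩ | ⟨h1, h2⟩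
        · -- b₀ < b < b₁, b < a < c : a ∈ T₀
          refine left_subset _ _ (right_subset _ _
            ⟨⟨haA, mem_between hb₀ hc (Or.inl ⟨hb01.trans h1, h2⟩)⟩,
              mem_between ⟨⟨hbB, Or.inr ⟨b₀, hb₀, b₁, hb₁, Or.inl ⟨hb01, hb02⟩⟩⟩,
                mem_between haA hb₀ (Or.inr ⟨hb01, h1⟩)⟩ hc (Or.inl ⟨h1, h2⟩)⟩)
        · -- b₀ < b < b₁, c < a < b : a ∈ T₁
          refine right_subset _ _
            ⟨⟨haA, mem_between hb₁ hc (Or.inr ⟨h1, h2.trans hb02⟩)⟩,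
              mem_between ⟨⟨hbB, Or.inr ⟨b₀, hb₀, b₁, hb₁, Or.inl ⟨hb01, hb02⟩⟩⟩,
                mem_between haA hb₁ (Or.inl ⟨h2, hb02⟩)⟩ hc (Or.inr ⟨h1, h2⟩)⟩
        · -- b₁ < b < b₀, b < a < c : a ∈ T₁
          refine right_subset _ _
            ⟨⟨haA, mem_between hb₁ hc (Or.inl ⟨hb11.trans h1, h2⟩)⟩,
              mem_between ⟨⟨hbB, Or.inr ⟨b₀, hb₀, b₁, hb₁, Or.inr ⟨hb11, hb12⟩⟩⟩,
                mem_between haA hb₁ (Or.inr ⟨hb11, h1⟩)⟩ hc (Or.inl ⟨h1, h2⟩)⟩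
        · -- b₁ < b < b₀, c < a < b : a ∈ T₀
          refine left_subset _ _ (right_subset _ _
            ⟨⟨haA, mem_between hb₀ hc (Or.inr ⟨h1, h2.trans hb12⟩)⟩,
              mem_between ⟨⟨hbB, Or.inr ⟨b₀, hb₀, b₁, hb₁, Or.inr ⟨hb11, hb12⟩⟩⟩,
                mem_between haA hb₀ (Or.inl ⟨h2, hb12⟩)⟩ hc (Or.inr ⟨h1, h2⟩)⟩)
  · -- easy direction
    have hD : (A ∩ cJoin B' C).OrdConnected := hA.inter (cJoin_ordConnected hB' hC)
    have hAB' : A ∩ B' ⊆ A ∩ cJoin B' C := fun a ⟨ha, hb⟩ => ⟨ha, left_subset _ _ hb⟩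
    have hT0 : T₀ ⊆ A ∩ cJoin B' C := fun a ⟨⟨ha, _⟩, h3⟩ =>
      ⟨ha, cJoin_mono Set.inter_subset_left (Set.Subset.refl C) h3⟩
    have hT1 : T₁ ⊆ A ∩ cJoin B' C := fun a ⟨⟨ha, _⟩, h3⟩ =>
      ⟨ha, cJoin_mono Set.inter_subset_left (Set.Subset.refl C) h3⟩
    exact cJoin_subset hD (cJoin_subset hD hAB' hT0) hT1
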